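/- The graph Γ* is indivisible but not symmetrically indivisible. -/

import Mathlib

def IsSymmetricGraphEmb {α β : Type*} {G : SimpleGraph α} {H : SimpleGraph β}
    (e : G ↪g H) : Prop :=
  ∀ g : G ≃g G, ∃ g' : H ≃g H, ∀ x, g' (e x) = e (g x)

def IndivGraph {α : Type*} (G : SimpleGraph α) : Prop :=
  ∀ c : α → Bool, ∃ e : G ↪g G, ∀ x y, c (e x) = c (e y)

def SymIndivGraph {α : Type*} (G : SimpleGraph α) : Prop :=
  ∀ c : α → Bool, ∃ e : G ↪g G, IsSymmetricGraphEmb e ∧ ∀ x y, c (e x) = c (e y)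

def HasExtProp {α : Type*} (G : SimpleGraph α) : Prop :=
  ∀ A B : Finset α, Disjoint A B →
    ∃ v, v ∉ A ∧ v ∉ B ∧ (∀ a ∈ A, G.Adj v a) ∧ ∀ b ∈ B, ¬ G.Adj v b

/-- The graph `Γ*`: to the graph `Γ` with enumeration `g` we attach, for each `n`,
an `n`-element clique `K_n` all of whose vertices are joined to `g n`. -/
def GammaStar {V : Type*} (Γ : SimpleGraph V) (g : ℕ → V) :
    SimpleGraph (V ⊕ (Σ n : ℕ, Fin n)) where
  Adj x y :=
    match x, y with
    | Sum.inl u, Sum.inl v => Γ.Adj u v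
    | Sum.inr p, Sum.inr q => p.1 = q.1 ∧ p ≠ q
    | Sum.inl v, Sum.inr p => v = g p.1
    | Sum.inr p, Sum.inl v => v = g p.1
  symm := by
    refine ⟨?_⟩
    rintro (u | p) (v | q) h
    · exact Γ.adj_symm h
    · exact h
    · exact h
    · exact ⟨h.1.symm, h.2.symm⟩
  loopless := by
    refine ⟨?_⟩
    rintro (u | p) h
    · exact Γ.irrefl h
    · exact h.2 rfl


/-!
Indivisibility. Given a colouring, look at `Γ` inside `Γ*`. Either the `true` vertices witness
every instance of the extension property, or some pair `A₀, B₀` has only `false` witnesses, and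
then the witnesses of `A₀, B₀` witness every extension among themselves. Either way some
monochromatic induced subgraph of `Γ` has the extension property, and every countable graph, in
particular `Γ*`, embeds into it by the forth half of the back-and-forth argument.

Failure of symmetric indivisibility. Vertices of `Γ` have infinite degree while the vertices of
`K_n` have degree `n`, so an automorphism preserves `Γ` and each `K_n`; it therefore fixes every
`g n` with `n ≥ 1`, hence, `g` being a bijection, all of `Γ`. Colour `Γ` and the cliques
differently: an embedding sends `Γ` into `Γ` by degree, so a monochromatic one lands in `Γ`.
Its range is then fixed by every automorphism, and symmetry forces every automorphism of `Γ*`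
to be the identity. Swapping the two vertices of `K₂` is not.
-/

open Function Sum

namespace SimpleGraph

variable {V W : Type*} {G : SimpleGraph V} {H : SimpleGraph W}

def Iso.swapTwins [DecidableEq V] (G : SimpleGraph V) {a b : V}
    (h : ∀ z, z ≠ a → z ≠ b → (G.Adj a z ↔ G.Adj b z)) : G ≃g G where
  toEquiv := Equiv.swap a b
  map_rel_iff' {x y} := by
    simp only [Equiv.swap_apply_def]
    split_ifs <;> subst_vars <;> grind [SimpleGraph.adj_comm, SimpleGraph.irrefl]

theorem Embedding.infinite_neighborSet (e : G ↪g H) {v : V}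
    (hv : (G.neighborSet v).Infinite) : (H.neighborSet (e v)).Infinite :=
  (hv.image e.injective.injOn).mono (e.toHom.image_neighborSet_subset v)

theorem Iso.ncard_neighborSet (f : G ≃g H) (v : V) :
    (H.neighborSet (f v)).ncard = (G.neighborSet v).ncard := by
  rw [← f.image_neighborSet, Set.ncard_image_of_injective _ f.injective]

end SimpleGraph

theorem IsSymmetricGraphEmb.apply_eq_self {V W : Type*} {G : SimpleGraph V}
    {H : SimpleGraph W} {e : G ↪g H} (he : IsSymmetricGraphEmb e)
    (hfix : ∀ (ψ : H ≃g H) x, ψ (e x) = e x) (φ : G ≃g G) (x : V) : φ x = x := by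
  obtain ⟨ψ, hψ⟩ := he φ
  exact e.injective ((hψ x).symm.trans (hfix ψ x))

theorem hasExtProp_induce {V : Type*} {G : SimpleGraph V} {S : Set V}
    (h : ∀ A B : Finset V, ↑A ⊆ S → ↑B ⊆ S → Disjoint A B →
      ∃ v ∈ S, v ∉ A ∧ v ∉ B ∧ (∀ a ∈ A, G.Adj v a) ∧ ∀ b ∈ B, ¬ G.Adj v b) :
    HasExtProp (G.induce S) := by
  intro A B hAB
  obtain ⟨v, hvS, hvA, hvB, hadj, hnadj⟩ := h (A.map (.subtype _)) (B.map (.subtype _))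
    (by simp) (by simp) (Finset.disjoint_map _ |>.mpr hAB)
  exact ⟨⟨v, hvS⟩, fun ha => hvA (Finset.mem_map_of_mem _ ha),
    fun hb => hvB (Finset.mem_map_of_mem _ hb),
    fun a ha => hadj a (Finset.mem_map_of_mem _ ha),
    fun b hb => hnadj b (Finset.mem_map_of_mem _ hb)⟩

namespace HasExtProp

variable {V : Type*} {G : SimpleGraph V}

theorem nonempty (hG : HasExtProp G) : Nonempty V :=
  let ⟨v, _⟩ := hG ∅ ∅ (Finset.disjoint_empty_left ∅)
  ⟨v⟩

theorem infinite_neighborSet (hG : HasExtProp G) (v : V) : (G.neighborSet v).Infinite := by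
  classical
  intro hfin
  obtain ⟨w, -, hw, hadj, -⟩ := hG {v} hfin.toFinset (by simp)
  exact hw (hfin.mem_toFinset.mpr (G.adj_symm (hadj v (Finset.mem_singleton_self v))))

theorem exists_adj_iff (hG : HasExtProp G) {ι : Type*} {s : Finset ι} {p : ι → V}
    (hp : Set.InjOn p s) (R : ι → Prop) :
    ∃ v, ∀ i ∈ s, v ≠ p i ∧ (G.Adj v (p i) ↔ R i) := by
  classical
  have hdisj : Disjoint ((s.filter R).image p) ((s.filter (¬ R ·)).image p) := by
    simp only [Finset.disjoint_left, Finset.mem_image, Finset.mem_filter]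
    rintro _ ⟨i, ⟨hi, hRi⟩, rfl⟩ ⟨j, ⟨hj, hRj⟩, hji⟩
    exact hRj (hp hj hi hji ▸ hRi)
  obtain ⟨v, hvA, hvB, hadj, hnadj⟩ := hG _ _ hdisj
  refine ⟨v, fun i hi => ?_⟩
  by_cases hR : R i
  · have hpi : p i ∈ (s.filter R).image p := Finset.mem_image_of_mem p (by simp [hi, hR])
    exact ⟨ne_of_mem_of_not_mem hpi hvA |>.symm, iff_of_true (hadj _ hpi) hR⟩
  · have hpi : p i ∈ (s.filter (¬ R ·)).image p := Finset.mem_image_of_mem p (by simp [hi, hR])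
    exact ⟨ne_of_mem_of_not_mem hpi hvB |>.symm, iff_of_false (hnadj _ hpi) hR⟩

/-- `epsilon` returns a junk vertex when no witness exists; `embedSeq_spec` shows by strong
induction that a witness always exists. -/
noncomputable def embedSeq [Nonempty V] (G : SimpleGraph V) (H : SimpleGraph ℕ) : ℕ → V :=
  Nat.strongRec fun n f => Classical.epsilon fun v =>
    ∀ j (hj : j < n), v ≠ f j hj ∧ (G.Adj v (f j hj) ↔ H.Adj n j)

theorem embedSeq_eq [Nonempty V] (H : SimpleGraph ℕ) (n : ℕ) :
    embedSeq G H n = Classical.epsilon fun v =>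
      ∀ j < n, v ≠ embedSeq G H j ∧ (G.Adj v (embedSeq G H j) ↔ H.Adj n j) :=
  Nat.strongRec_eq _ n

theorem embedSeq_spec [Nonempty V] (hG : HasExtProp G) (H : SimpleGraph ℕ) (n : ℕ) :
    ∀ j < n, embedSeq G H n ≠ embedSeq G H j ∧
      (G.Adj (embedSeq G H n) (embedSeq G H j) ↔ H.Adj n j) := by
  induction n using Nat.strong_induction_on with
  | _ n ih =>
  have hinj : Set.InjOn (embedSeq G H) (Finset.range n) := by
    intro j hj k hk hjk
    simp only [Finset.coe_range, Set.mem_Iio] at hj hk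
    by_contra hne
    rcases lt_or_gt_of_ne hne with h | h
    · exact (ih k hk j h).1 hjk.symm
    · exact (ih j hj k h).1 hjk
  rw [embedSeq_eq]
  obtain ⟨v, hv⟩ := hG.exists_adj_iff hinj (H.Adj n)
  exact Classical.epsilon_spec (p := fun v => ∀ j < n, v ≠ embedSeq G H j ∧ _)
    ⟨v, fun j hj => hv j (Finset.mem_range.mpr hj)⟩

theorem nonempty_embedding_of_nat (hG : HasExtProp G) (H : SimpleGraph ℕ) :
    Nonempty (H ↪g G) := by
  have := hG.nonempty
  have hspec := embedSeq_spec hG H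
  have hinj : Injective (embedSeq G H) := by
    intro m n hmn
    by_contra hne
    rcases lt_or_gt_of_ne hne with h | h
    · exact (hspec n m h).1 hmn.symm
    · exact (hspec m n h).1 hmn
  refine ⟨⟨⟨embedSeq G H, hinj⟩, fun {m n} => ?_⟩⟩
  rcases lt_trichotomy m n with h | rfl | h
  · exact G.adj_comm _ _ |>.trans <| (hspec n m h).2.trans <| H.adj_comm _ _
  · simp
  · exact (hspec m n h).2

theorem nonempty_embedding (hG : HasExtProp G) {W : Type*} [Countable W]
    (H : SimpleGraph W) : Nonempty (H ↪g G) := by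
  obtain ⟨ι, hι⟩ := Countable.exists_injective_nat W
  obtain ⟨φ⟩ := hG.nonempty_embedding_of_nat (H.map (⟨ι, hι⟩ : W ↪ ℕ))
  exact ⟨φ.comp (SimpleGraph.Embedding.map ⟨ι, hι⟩ H)⟩

theorem exists_monochromatic_induce (hG : HasExtProp G) (c : V → Bool) :
    ∃ S : Set V, ∃ b, (∀ v ∈ S, c v = b) ∧ HasExtProp (G.induce S) := by
  classical
  by_cases htrue : ∀ A B : Finset V, Disjoint A B → ∃ v, v ∉ A ∧ v ∉ B ∧
      (∀ a ∈ A, G.Adj v a) ∧ (∀ b ∈ B, ¬ G.Adj v b) ∧ c v = true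
  · refine ⟨{v | c v = true}, true, fun v hv => hv, hasExtProp_induce fun A B _ _ hAB => ?_⟩
    obtain ⟨v, hvA, hvB, hadj, hnadj, hc⟩ := htrue A B hAB
    exact ⟨v, hc, hvA, hvB, hadj, hnadj⟩
  push Not at htrue
  obtain ⟨A₀, B₀, hAB₀, hfalse⟩ := htrue
  refine ⟨{v | v ∉ A₀ ∧ v ∉ B₀ ∧ (∀ a ∈ A₀, G.Adj v a) ∧ ∀ b ∈ B₀, ¬ G.Adj v b}, false,
    fun v ⟨hvA, hvB, hadj, hnadj⟩ => by simpa using hfalse v hvA hvB hadj hnadj,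
    hasExtProp_induce fun A B hA hB hAB => ?_⟩
  have hdisj : Disjoint (A₀ ∪ A) (B₀ ∪ B) := by
    simp only [Finset.disjoint_union_left, Finset.disjoint_union_right]
    exact ⟨⟨hAB₀, Finset.disjoint_left.mpr fun _ hx => (hA hx).2.1⟩,
      Finset.disjoint_right.mpr fun _ hx => (hB hx).1, hAB⟩
  obtain ⟨v, hvA, hvB, hadj, hnadj⟩ := hG _ _ hdisj
  simp only [Finset.mem_union, not_or] at hvA hvB
  exact ⟨v, ⟨hvA.1, hvB.1, fun a ha => hadj a (by simp [ha]), fun b hb => hnadj b (by simp [hb])⟩,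
    hvA.2, hvB.2, fun a ha => hadj a (by simp [ha]), fun b hb => hnadj b (by simp [hb])⟩

end HasExtProp

theorem indivGraph_of_embedding {V W : Type*} [Countable W] {G : SimpleGraph V}
    {H : SimpleGraph W} (hG : HasExtProp G) (φ : G ↪g H) : IndivGraph H := by
  intro c
  obtain ⟨S, b, hS, hGS⟩ := hG.exists_monochromatic_induce (c ∘ φ)
  obtain ⟨ψ⟩ := hGS.nonempty_embedding H
  refine ⟨φ.comp ((SimpleGraph.Embedding.induce S).comp ψ), fun x y => ?_⟩
  exact (hS _ (ψ x).2).trans (hS _ (ψ y).2).symm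

namespace GammaStar

variable {V : Type*} {Γ : SimpleGraph V} {g : ℕ → V}

theorem neighborSet_inr (n : ℕ) (i : Fin n) :
    (GammaStar Γ g).neighborSet (inr ⟨n, i⟩) =
      Set.range fun j : Fin n => if j = i then inl (g n) else inr ⟨n, j⟩ := by
  ext (u | ⟨m, k⟩)
  · simp only [SimpleGraph.mem_neighborSet, GammaStar, Set.mem_range]
    constructor
    · rintro rfl; exact ⟨i, by simp⟩
    · rintro ⟨j, hj⟩
      split_ifs at hj
      exact (inl_injective hj).symm
  · simp only [SimpleGraph.mem_neighborSet, GammaStar, Set.mem_range]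
    constructor
    · rintro ⟨rfl, hne⟩
      exact ⟨k, by rw [if_neg (by rintro rfl; exact hne rfl)]⟩
    · rintro ⟨j, hj⟩
      split_ifs at hj with hji
      obtain ⟨rfl, hjk⟩ := Sigma.mk.inj_iff.mp (inr_injective hj)
      exact ⟨rfl, by rintro ⟨⟩; exact hji (eq_of_heq hjk)⟩

theorem ncard_neighborSet_inr (p : Σ n, Fin n) :
    ((GammaStar Γ g).neighborSet (inr p)).ncard = p.1 := by
  obtain ⟨n, i⟩ := p
  rw [neighborSet_inr, Set.ncard_range_of_injective, Nat.card_fin]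
  intro j k hjk
  by_cases hj : j = i <;> by_cases hk : k = i <;> simp_all

def inlEmbedding (Γ : SimpleGraph V) (g : ℕ → V) : Γ ↪g GammaStar Γ g :=
  ⟨Embedding.inl, Iff.rfl⟩

theorem isLeft_of_infinite_neighborSet {x : V ⊕ Σ n, Fin n}
    (hx : ((GammaStar Γ g).neighborSet x).Infinite) : x.isLeft := by
  rcases x with u | p
  · rfl
  · exact absurd (Set.finite_of_ncard_pos (ncard_neighborSet_inr p ▸ p.2.pos)) hx

theorem exists_embedding_apply_inl (hΓ : HasExtProp Γ) (e : GammaStar Γ g ↪g GammaStar Γ g) (v : V) :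
    ∃ u, e (inl v) = inl u :=
  isLeft_iff.mp <| isLeft_of_infinite_neighborSet <|
    e.infinite_neighborSet <| (inlEmbedding Γ g).infinite_neighborSet (hΓ.infinite_neighborSet v)

theorem exists_iso_apply_inr (hΓ : HasExtProp Γ) (f : GammaStar Γ g ≃g GammaStar Γ g)
    (p : Σ n, Fin n) : ∃ q : Σ n, Fin n, f (inr p) = inr q ∧ q.1 = p.1 := by
  obtain ⟨q, hq⟩ : ∃ q, f (inr p) = inr q := by
    rcases h : f (inr p) with u | q
    · obtain ⟨w, hw⟩ := exists_embedding_apply_inl hΓ f.symm.toEmbedding u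
      simp [← h] at hw
    · exact ⟨q, rfl⟩
  refine ⟨q, hq, ?_⟩
  rw [← ncard_neighborSet_inr (Γ := Γ) (g := g), ← hq, f.ncard_neighborSet,
    ncard_neighborSet_inr]

theorem iso_apply_inl_of_pos (hΓ : HasExtProp Γ) (f : GammaStar Γ g ≃g GammaStar Γ g)
    {n : ℕ} (hn : 0 < n) : f (inl (g n)) = inl (g n) := by
  obtain ⟨u, hu⟩ : ∃ u, f (inl (g n)) = inl u := exists_embedding_apply_inl hΓ f.toEmbedding (g n)
  obtain ⟨q, hq, hqn⟩ := exists_iso_apply_inr hΓ f ⟨n, ⟨0, hn⟩⟩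
  have hadj : (GammaStar Γ g).Adj (f (inl (g n))) (f (inr ⟨n, ⟨0, hn⟩⟩)) :=
    f.map_adj_iff.mpr rfl
  rw [hu, hq] at hadj
  change u = g q.1 at hadj
  rw [hu, hadj, hqn]

theorem iso_apply_inl (hΓ : HasExtProp Γ) (hg : Bijective g)
    (f : GammaStar Γ g ≃g GammaStar Γ g) (v : V) : f (inl v) = inl v := by
  obtain ⟨n, rfl⟩ := hg.2 v
  rcases Nat.eq_zero_or_pos n with rfl | hn
  · obtain ⟨u, hu⟩ : ∃ u, f (inl (g 0)) = inl u := exists_embedding_apply_inl hΓ f.toEmbedding (g 0)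
    obtain ⟨k, rfl⟩ := hg.2 u
    rcases Nat.eq_zero_or_pos k with rfl | hk
    · exact hu
    · have := f.injective (hu.trans (iso_apply_inl_of_pos hΓ f hk).symm)
      exact absurd (hg.1 (inl_injective this)) hk.ne
  · exact iso_apply_inl_of_pos hΓ f hn

theorem adj_inr_iff_adj_inr (n : ℕ) (i j : Fin n) (z : V ⊕ Σ n, Fin n)
    (hi : z ≠ inr ⟨n, i⟩) (hj : z ≠ inr ⟨n, j⟩) :
    (GammaStar Γ g).Adj (inr ⟨n, i⟩) z ↔ (GammaStar Γ g).Adj (inr ⟨n, j⟩) z := by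
  rcases z with u | q
  · exact Iff.rfl
  · exact and_congr_right fun _ =>
      iff_of_true (fun h => hi (congrArg inr h).symm) (fun h => hj (congrArg inr h).symm)

theorem not_symIndivGraph (hΓ : HasExtProp Γ) (hg : Bijective g) :
    ¬ SymIndivGraph (GammaStar Γ g) := by
  classical
  intro hsym
  obtain ⟨e, he, hmono⟩ := hsym isRight
  obtain ⟨u, hu⟩ := exists_embedding_apply_inl hΓ e (g 0)
  have hfix (ψ : GammaStar Γ g ≃g GammaStar Γ g) (x) : ψ (e x) = e x := by
    obtain ⟨w, hw⟩ : ∃ w, e x = inl w := isLeft_iff.mp <| by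
      simpa [hu] using hmono x (inl (g 0))
    rw [hw, iso_apply_inl hΓ hg]
  have := he.apply_eq_self hfix
    (SimpleGraph.Iso.swapTwins _ (adj_inr_iff_adj_inr (g := g) 2 0 1)) (inr ⟨2, 0⟩)
  simp [SimpleGraph.Iso.swapTwins] at this

end GammaStar

theorem gammaStar_indivisible_not_symIndivisible {V : Type*} [Countable V]
    (Γ : SimpleGraph V) (hΓ : HasExtProp Γ) (g : ℕ → V) (hg : Function.Bijective g) :
    IndivGraph (GammaStar Γ g) ∧ ¬ SymIndivGraph (GammaStar Γ g) :=
  ⟨indivGraph_of_embedding hΓ (GammaStar.inlEmbedding Γ g), GammaStar.not_symIndivGraph hΓ hg⟩
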